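/- For real numbers a, b, c, v with c > 0, 0 < v < 4, and |a| + |b| < vc, the integral ∫₀^∞ sinh(ax)·sinh(bx)/cosh^v(cx) dx equals (2^{v−3}/(c·Γ(v)))·[Γ((vc+a+b)/(2c))·Γ((vc−a−b)/(2c)) − Γ((vc+a−b)/(2c))·Γ((vc−a+b)/(2c))]. -/

import Mathlib

open Real MeasureTheory Set

lemma realBeta (p q : ℝ) (hp : 0 < p) (hq : 0 < q) :
    ∫ u in Ioo (0:ℝ) 1, u ^ (p-1) * (1-u) ^ (q-1)
      = Real.Gamma p * Real.Gamma q / Real.Gamma (p+q) := by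
  have hG : 0 < Real.Gamma (p+q) := Real.Gamma_pos_of_pos (by linarith)
  rw [eq_div_iff hG.ne']
  have h := Complex.Gamma_mul_Gamma_eq_betaIntegral
    (s := (p:ℂ)) (t := (q:ℂ)) (by simpa using hp) (by simpa using hq)
  have hbeta : Complex.betaIntegral p q
      = ((∫ u in Ioo (0:ℝ) 1, u ^ (p-1) * (1-u) ^ (q-1) : ℝ) : ℂ) := by
    rw [Complex.betaIntegral]
    rw [intervalIntegral.integral_of_le (by norm_num : (0:ℝ) ≤ 1)]
    rw [MeasureTheory.integral_Ioc_eq_integral_Ioo]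
    have step : ∫ t in Ioo (0:ℝ) 1, (t:ℂ) ^ ((p:ℂ)-1) * (1-(t:ℂ)) ^ ((q:ℂ)-1)
        = ∫ t in Ioo (0:ℝ) 1, ((t ^ (p-1) * (1-t) ^ (q-1) : ℝ) : ℂ) := by
      refine setIntegral_congr_fun measurableSet_Ioo (fun x hx => ?_)
      obtain ⟨h0, h1⟩ := hx
      rw [Complex.ofReal_mul, Complex.ofReal_cpow h0.le, Complex.ofReal_cpow (by linarith),
        Complex.ofReal_sub, Complex.ofReal_sub, Complex.ofReal_one]
      push_cast
      ring_nf
    rw [step]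
    exact integral_ofReal
  rw [hbeta, ← Complex.ofReal_add, Complex.Gamma_ofReal, Complex.Gamma_ofReal,
    Complex.Gamma_ofReal, ← Complex.ofReal_mul, ← Complex.ofReal_mul] at h
  rw [mul_comm]
  exact_mod_cast h.symm

lemma coshRpowPos (v x : ℝ) : 0 < Real.cosh x ^ v := Real.rpow_pos_of_pos (Real.cosh_pos x) v

lemma expIntAux (t v : ℝ) (hv : 0 < v) (ht : t < v) :
    IntegrableOn (fun x => Real.exp (t*x) / Real.cosh x ^ v) (Ioi (0:ℝ)) := by
  have hcont : Continuous (fun x => Real.exp (t*x) / Real.cosh x ^ v) := by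
    refine (Real.continuous_exp.comp (continuous_const.mul continuous_id)).div
      (Real.continuous_cosh.rpow_const (fun x => Or.inl (Real.cosh_pos x).ne')) ?_
    exact fun x => (coshRpowPos v x).ne'
  have hbound : IntegrableOn (fun x => (2:ℝ)^v * Real.exp (-(v-t)*x)) (Ioi (0:ℝ)) :=
    (exp_neg_integrableOn_Ioi 0 (by linarith : 0 < v - t)).const_mul _
  refine Integrable.mono' hbound hcont.aestronglyMeasurable ?_
  filter_upwards [ae_restrict_mem measurableSet_Ioi] with x hx
  have hx0 : (0:ℝ) < x := hx
  have hch : Real.exp x / 2 ≤ Real.cosh x := by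
    rw [Real.cosh_eq]
    have := (Real.exp_pos (-x)).le
    linarith
  have h1 : (Real.exp x / 2) ^ v ≤ Real.cosh x ^ v :=
    Real.rpow_le_rpow (by positivity) hch hv.le
  have h2 : (Real.exp x / 2) ^ v = Real.exp (v*x) / 2^v := by
    rw [Real.div_rpow (Real.exp_pos x).le (by norm_num), ← Real.exp_mul, mul_comm]
  rw [norm_of_nonneg (by positivity)]
  rw [div_le_iff₀ (coshRpowPos v x)]
  calc Real.exp (t*x) = (2:ℝ)^v * Real.exp (-(v-t)*x) * (Real.exp (v*x) / 2^v) := by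
        field_simp
        rw [← Real.exp_add]; congr 1; ring
    _ ≤ (2:ℝ)^v * Real.exp (-(v-t)*x) * Real.cosh x ^ v := by
        refine mul_le_mul_of_nonneg_left ?_ (by positivity)
        rw [← h2]; exact h1

lemma expDeriv : ∀ x : ℝ, HasDerivAt (fun x => Real.exp (-2*x)) (-2 * Real.exp (-2*x)) x := by
  intro x
  have h := ((hasDerivAt_id x).const_mul (-2:ℝ)).exp
  simpa [mul_comm] using h

lemma imageExp : (fun x => Real.exp (-2*x)) '' (Ioi (0:ℝ)) = Ioo (0:ℝ) 1 := by
  ext u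
  constructor
  · rintro ⟨x, hx, rfl⟩
    exact ⟨Real.exp_pos _, Real.exp_lt_one_iff.mpr (by simp at hx ⊢; linarith)⟩
  · rintro ⟨hu0, hu1⟩
    refine ⟨-(Real.log u)/2, ?_, ?_⟩
    · have := Real.log_neg hu0 hu1
      simp only [mem_Ioi]; linarith
    · show Real.exp (-2 * (-(Real.log u)/2)) = u
      rw [show (-2:ℝ) * (-(Real.log u)/2) = Real.log u by ring, Real.exp_log hu0]

lemma subst1 (p q : ℝ) (hp : 0 < p) (hq : 0 < q) :
    ∫ u in Ioo (0:ℝ) 1, u^(p-1) * (1+u)^(-(p+q))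
      = (2:ℝ)^(1-(p+q)) * ∫ x in Ioi (0:ℝ), Real.exp ((q-p)*x) / Real.cosh x ^ (p+q) := by
  set v := p + q with hv
  have key := integral_image_eq_integral_abs_deriv_smul (f := fun x => Real.exp (-2*x))
    (f' := fun x => -2 * Real.exp (-2*x)) (s := Ioi (0:ℝ)) measurableSet_Ioi
    (fun x _ => (expDeriv x).hasDerivWithinAt)
    (fun x _ y _ hxy => by
      have := Real.exp_injective hxy; linarith [this])
    (fun u => u^(p-1) * (1+u)^(-v))
  rw [imageExp] at key
  rw [key]
  rw [← integral_const_mul]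
  refine setIntegral_congr_fun measurableSet_Ioi (fun x hx => ?_)
  have hx0 : (0:ℝ) < x := hx
  have he : (0:ℝ) < Real.exp (-2*x) := Real.exp_pos _
  have h1 : (1:ℝ) + Real.exp (-2*x) = 2 * Real.cosh x * Real.exp (-x) := by
    rw [Real.cosh_eq, show (-2:ℝ)*x = -x + -x by ring, Real.exp_add]
    rw [Real.exp_neg]
    field_simp [Real.exp_ne_zero]
  have h2 : ((1:ℝ) + Real.exp (-2*x))^(-v)
      = ((2:ℝ)^v)⁻¹ * ((Real.cosh x)^v)⁻¹ * Real.exp (v*x) := by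
    rw [h1, Real.mul_rpow (by positivity) (Real.exp_pos _).le,
      Real.mul_rpow (by norm_num) (Real.cosh_pos x).le, ← Real.exp_mul,
      Real.rpow_neg (by norm_num), Real.rpow_neg (Real.cosh_pos x).le,
      show -x*-v = v*x by ring]
  have h3 : (Real.exp (-2*x))^(p-1) = Real.exp (-2*x*(p-1)) := (Real.exp_mul _ _).symm
  simp only [smul_eq_mul]
  rw [h2, h3, abs_of_nonpos (by nlinarith [he] : -2 * Real.exp (-2*x) ≤ 0)]
  rw [show (2:ℝ)^(1-v) = 2 * ((2:ℝ)^v)⁻¹ by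
    rw [Real.rpow_sub (by norm_num), Real.rpow_one, div_eq_mul_inv]]
  rw [div_eq_mul_inv]
  have hE : Real.exp (-2*x) * Real.exp (-2*x*(p-1)) * Real.exp (v*x)
      = Real.exp ((q-p)*x) := by
    rw [← Real.exp_add, ← Real.exp_add]
    congr 1
    rw [hv]; ring
  linear_combination (2 * ((2:ℝ)^v)⁻¹ * ((Real.cosh x ^ v)⁻¹)) * hE

lemma imageMobius : (fun u => u/(1+u)) '' (Ioo (0:ℝ) 1) = Ioo (0:ℝ) (1/2) := by
  ext w
  simp only [mem_image, mem_Ioo]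
  constructor
  · rintro ⟨u, ⟨hu0, hu1⟩, rfl⟩
    constructor
    · positivity
    · rw [div_lt_iff₀ (by linarith)]; linarith
  · rintro ⟨hw0, hw1⟩
    have h1w : (0:ℝ) < 1 - w := by linarith
    refine ⟨w/(1-w), ⟨div_pos hw0 h1w, ?_⟩, ?_⟩
    · rw [div_lt_one h1w]; linarith
    · show w/(1-w) / (1 + w/(1-w)) = w
      rw [show 1 + w/(1-w) = 1/(1-w) by field_simp; ring]
      field_simp

lemma subst2 (p q : ℝ) (hp : 0 < p) (hq : 0 < q) :
    ∫ u in Ioo (0:ℝ) 1, u^(p-1) * (1+u)^(-(p+q))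
      = ∫ w in Ioo (0:ℝ) (1/2), w^(p-1) * (1-w)^(q-1) := by
  have key := integral_image_eq_integral_abs_deriv_smul (f := fun u => u/(1+u))
    (f' := fun u => 1/(1+u)^2) (s := Ioo (0:ℝ) 1) measurableSet_Ioo
    (fun u hu => by
      have h1 : (1:ℝ) + u ≠ 0 := by have := hu.1; intro hc; linarith
      have := (hasDerivAt_id' u).fun_div ((hasDerivAt_id' u).const_add 1) h1
      simpa using this.hasDerivWithinAt)
    (fun x hx y hy hxy => by
      have hx1 : (0:ℝ) < 1 + x := by have := hx.1; linarith
      have hy1 : (0:ℝ) < 1 + y := by have := hy.1; linarith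
      rw [div_eq_div_iff hx1.ne' hy1.ne'] at hxy
      nlinarith)
    (fun w => w^(p-1) * (1-w)^(q-1))
  rw [imageMobius] at key
  rw [key]
  refine setIntegral_congr_fun measurableSet_Ioo (fun u hu => ?_)
  obtain ⟨hu0, hu1⟩ := hu
  have h1 : (0:ℝ) < 1 + u := by linarith
  have e1 : (u/(1+u))^(p-1) = u^(p-1) / (1+u)^(p-1) := Real.div_rpow hu0.le h1.le (p-1)
  have e2 : (1 - u/(1+u)) = (1+u)⁻¹ := by field_simp; ring
  have e3 : ((1+u)⁻¹ : ℝ)^(q-1) = ((1+u)^(q-1))⁻¹ := Real.inv_rpow h1.le _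
  have e4 : ((1:ℝ)+u)^(-(p+q)) = (((1+u)^(2:ℕ)) * ((1+u)^(p-1) * (1+u)^(q-1)))⁻¹ := by
    rw [← Real.rpow_natCast (1+u) 2, ← Real.rpow_add h1, ← Real.rpow_add h1,
      ← Real.rpow_neg h1.le]
    congr 1
    push_cast; ring
  simp only [smul_eq_mul]
  rw [e1, e2, e3, e4, abs_of_pos (by positivity : (0:ℝ) < 1/(1+u)^2)]
  field_simp

lemma subst3 (p q : ℝ) :
    ∫ w in Ioo (1/2:ℝ) 1, w^(p-1) * (1-w)^(q-1)
      = ∫ w in Ioo (0:ℝ) (1/2), w^(q-1) * (1-w)^(p-1) := by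
  have key := integral_image_eq_integral_abs_deriv_smul (f := fun w => 1 - w)
    (f' := fun _ => (-1:ℝ)) (s := Ioo (0:ℝ) (1/2)) measurableSet_Ioo
    (fun u _ => (((hasDerivAt_id u).const_sub 1).congr_deriv (by norm_num)).hasDerivWithinAt)
    (fun x _ y _ hxy => by dsimp at hxy; linarith)
    (fun w => w^(p-1) * (1-w)^(q-1))
  have himg : (fun w => 1 - w) '' Ioo (0:ℝ) (1/2) = Ioo (1/2:ℝ) 1 := by
    ext w
    simp only [mem_image, mem_Ioo]
    constructor
    · rintro ⟨u, ⟨h0, h1⟩, rfl⟩; constructor <;> linarith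
    · rintro ⟨h0, h1⟩; exact ⟨1 - w, ⟨by linarith, by linarith⟩, by ring⟩
  rw [himg] at key
  rw [key]
  refine setIntegral_congr_fun measurableSet_Ioo (fun u _ => ?_)
  simp only [smul_eq_mul, abs_neg, abs_one, one_mul, sub_sub_cancel]
  ring

lemma betaIntegrable (p q : ℝ) (hp : 0 < p) (hq : 0 < q) :
    IntegrableOn (fun w => w^(p-1) * (1-w)^(q-1)) (Ioo (0:ℝ) 1) := by
  have hp' : 0 < Complex.re (p:ℂ) := by simpa using hp
  have hq' : 0 < Complex.re (q:ℂ) := by simpa using hq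
  have h := (Complex.betaIntegral_convergent hp' hq').norm
  have h2 : IntegrableOn (fun x : ℝ => ‖(x:ℂ)^((p:ℂ)-1) * (1-(x:ℂ))^((q:ℂ)-1)‖) (Ioc (0:ℝ) 1) :=
    (intervalIntegrable_iff_integrableOn_Ioc_of_le (by norm_num)).mp h
  refine (h2.mono_set Ioo_subset_Ioc_self).congr_fun (fun x hx => ?_) measurableSet_Ioo
  obtain ⟨h0, h1⟩ := hx
  beta_reduce; rw [norm_mul]
  rw [show (1:ℂ) - (x:ℂ) = ((1-x : ℝ):ℂ) by push_cast; ring]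
  rw [Complex.norm_cpow_eq_rpow_re_of_pos h0, Complex.norm_cpow_eq_rpow_re_of_pos (by linarith)]
  norm_num

lemma betaSplit (p q : ℝ) (hp : 0 < p) (hq : 0 < q) :
    (∫ w in Ioo (0:ℝ) (1/2), w^(p-1) * (1-w)^(q-1))
      + ∫ w in Ioo (1/2:ℝ) 1, w^(p-1) * (1-w)^(q-1)
      = ∫ w in Ioo (0:ℝ) 1, w^(p-1) * (1-w)^(q-1) := by
  have hI : IntegrableOn (fun w => w^(p-1) * (1-w)^(q-1)) (Ioc (0:ℝ) 1) :=
    (betaIntegrable p q hp hq).congr_set_ae Ioo_ae_eq_Ioc.symm |>.congr_set_ae (by rfl)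
  have i1 : IntervalIntegrable (fun w => w^(p-1) * (1-w)^(q-1)) volume 0 (1/2) :=
    (intervalIntegrable_iff_integrableOn_Ioc_of_le (by norm_num)).mpr
      (hI.mono_set (Ioc_subset_Ioc_right (by norm_num)))
  have i2 : IntervalIntegrable (fun w => w^(p-1) * (1-w)^(q-1)) volume (1/2) 1 :=
    (intervalIntegrable_iff_integrableOn_Ioc_of_le (by norm_num)).mpr
      (hI.mono_set (Ioc_subset_Ioc_left (by norm_num)))
  have := intervalIntegral.integral_add_adjacent_intervals i1 i2
  rw [intervalIntegral.integral_of_le (by norm_num : (0:ℝ) ≤ 1/2),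
    intervalIntegral.integral_of_le (by norm_num : (1/2:ℝ) ≤ 1),
    intervalIntegral.integral_of_le (by norm_num : (0:ℝ) ≤ 1),
    integral_Ioc_eq_integral_Ioo, integral_Ioc_eq_integral_Ioo,
    integral_Ioc_eq_integral_Ioo] at this
  exact this

lemma expInt (p q : ℝ) (hp : 0 < p) (hq : 0 < q) :
    ∫ x in Ioi (0:ℝ), Real.exp ((q-p)*x) / Real.cosh x ^ (p+q)
      = (2:ℝ)^(p+q-1) * ∫ w in Ioo (0:ℝ) (1/2), w^(p-1) * (1-w)^(q-1) := by
  have h := (subst1 p q hp hq).symm.trans (subst2 p q hp hq)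
  have h2 : (2:ℝ)^(1-(p+q)) ≠ 0 := by positivity
  have h3 : ((2:ℝ)^(1-(p+q)))⁻¹ = (2:ℝ)^(p+q-1) := by
    rw [← Real.rpow_neg (by norm_num), show -(1-(p+q)) = p+q-1 by ring]
  field_simp at h
  rw [← h3, eq_inv_mul_iff_mul_eq₀ (by positivity)]
  linarith [h]

lemma coshInt (p q : ℝ) (hp : 0 < p) (hq : 0 < q) :
    ∫ x in Ioi (0:ℝ), Real.cosh ((q-p)*x) / Real.cosh x ^ (p+q)
      = (2:ℝ)^(p+q-2) * (Real.Gamma p * Real.Gamma q / Real.Gamma (p+q)) := by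
  have hv : (0:ℝ) < p + q := by linarith
  have e : ∀ x : ℝ, Real.cosh ((q-p)*x) / Real.cosh x ^ (p+q)
      = (Real.exp ((q-p)*x) / Real.cosh x ^ (p+q)
          + Real.exp ((p-q)*x) / Real.cosh x ^ (p+q)) / 2 := by
    intro x
    rw [Real.cosh_eq, show -((q-p)*x) = (p-q)*x by ring]
    ring
  simp only [e]
  rw [integral_div, integral_add (expIntAux _ _ hv (by linarith)) (expIntAux _ _ hv (by linarith))]
  rw [expInt p q hp hq]
  have h2 := expInt q p hq hp
  rw [show q + p = p + q by ring] at h2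
  rw [h2, ← subst3 p q]
  rw [show (2:ℝ)^(p+q-2) = 2^(p+q-1)/2 by
    rw [show p+q-2 = (p+q-1)-1 by ring, Real.rpow_sub (by norm_num), Real.rpow_one]]
  rw [← realBeta p q hp hq, ← betaSplit p q hp hq]
  ring

lemma coshIntble (t c v : ℝ) (hc : 0 < c) (hv : 0 < v) (ht : |t| < v*c) :
    IntegrableOn (fun x => Real.cosh (t*x) / Real.cosh (c*x) ^ v) (Ioi (0:ℝ)) := by
  have hcont : Continuous (fun x => Real.cosh (t*x) / Real.cosh (c*x) ^ v) := by
    refine (Real.continuous_cosh.comp (continuous_const.mul continuous_id)).div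
      ((Real.continuous_cosh.comp (continuous_const.mul continuous_id)).rpow_const
        (fun x => Or.inl (Real.cosh_pos _).ne')) ?_
    exact fun x => (coshRpowPos v (c*x)).ne'
  have hbound : IntegrableOn (fun x => (2:ℝ)^v * Real.exp (-(v*c-|t|)*x)) (Ioi (0:ℝ)) :=
    (exp_neg_integrableOn_Ioi 0 (by linarith : 0 < v*c - |t|)).const_mul _
  refine Integrable.mono' hbound hcont.aestronglyMeasurable ?_
  filter_upwards [ae_restrict_mem measurableSet_Ioi] with x hx
  have hx0 : (0:ℝ) < x := hx
  have hch : Real.exp (c*x) / 2 ≤ Real.cosh (c*x) := by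
    rw [Real.cosh_eq]
    have := (Real.exp_pos (-(c*x))).le
    linarith
  have h1 : (Real.exp (c*x) / 2) ^ v ≤ Real.cosh (c*x) ^ v :=
    Real.rpow_le_rpow (by positivity) hch hv.le
  have h2 : (Real.exp (c*x) / 2) ^ v = Real.exp (v*(c*x)) / 2^v := by
    rw [Real.div_rpow (Real.exp_pos _).le (by norm_num), ← Real.exp_mul, mul_comm]
  have hnum : Real.cosh (t*x) ≤ Real.exp (|t| * x) := by
    rw [Real.cosh_eq]
    have e1 : Real.exp (t*x) ≤ Real.exp (|t| * x) :=
      Real.exp_le_exp.mpr (by nlinarith [le_abs_self t, hx0])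
    have e2 : Real.exp (-(t*x)) ≤ Real.exp (|t| * x) :=
      Real.exp_le_exp.mpr (by nlinarith [neg_abs_le t, hx0])
    linarith
  rw [norm_of_nonneg (by positivity)]
  rw [div_le_iff₀ (coshRpowPos v (c*x))]
  calc Real.cosh (t*x) ≤ Real.exp (|t| * x) := hnum
    _ = (2:ℝ)^v * Real.exp (-(v*c-|t|)*x) * (Real.exp (v*(c*x)) / 2^v) := by
        field_simp
        rw [← Real.exp_add]; congr 1; ring
    _ ≤ (2:ℝ)^v * Real.exp (-(v*c-|t|)*x) * Real.cosh (c*x) ^ v := by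
        refine mul_le_mul_of_nonneg_left ?_ (by positivity)
        rw [← h2]; exact h1

lemma coshScaled (t c v : ℝ) (hc : 0 < c) (hv : 0 < v) (ht : |t| < v*c) :
    ∫ x in Ioi (0:ℝ), Real.cosh (t*x) / Real.cosh (c*x) ^ v
      = c⁻¹ * ((2:ℝ)^(v-2) *
          (Real.Gamma ((v*c-t)/(2*c)) * Real.Gamma ((v*c+t)/(2*c)) / Real.Gamma v)) := by
  set p := (v*c-t)/(2*c) with hp
  set q := (v*c+t)/(2*c) with hq
  have hp0 : 0 < p := by
    apply div_pos _ (by linarith)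
    have := le_abs_self t; linarith
  have hq0 : 0 < q := by
    apply div_pos _ (by linarith)
    have := neg_abs_le t; linarith
  have hpq : p + q = v := by rw [hp, hq, ← add_div, div_eq_iff (mul_pos two_pos hc).ne']; ring
  have hqp : q - p = t/c := by rw [hp, hq]; field_simp; ring
  have key := coshInt p q hp0 hq0
  rw [hpq, hqp] at key
  have scale := integral_comp_mul_left_Ioi
    (fun y => Real.cosh ((t/c)*y) / Real.cosh y ^ v) 0 hc
  rw [mul_zero] at scale
  have e : ∀ x : ℝ, Real.cosh ((t/c)*(c*x)) / Real.cosh (c*x) ^ v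
      = Real.cosh (t*x) / Real.cosh (c*x) ^ v := by
    intro x; rw [show (t/c)*(c*x) = t*x by field_simp]
  simp only [e] at scale
  rw [scale, key, smul_eq_mul]

theorem sinh_sinh_div_cosh_rpow_integral (a b c v : ℝ) (hc : 0 < c) (hv0 : 0 < v)
    (hv4 : v < 4) (h : |a| + |b| < v * c) :
    ∫ x in Set.Ioi (0:ℝ), Real.sinh (a * x) * Real.sinh (b * x) / (Real.cosh (c * x)) ^ v
      = ((2 : ℝ) ^ (v - 3) / (c * Real.Gamma v)) *
          (Real.Gamma ((v * c + a + b) / (2 * c)) * Real.Gamma ((v * c - a - b) / (2 * c))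
            - Real.Gamma ((v * c + a - b) / (2 * c)) *
                Real.Gamma ((v * c - a + b) / (2 * c))) := by
  have hab1 : |a + b| < v * c := lt_of_le_of_lt (abs_add_le a b) h
  have hab2 : |a - b| < v * c := lt_of_le_of_lt (abs_sub a b) h
  have e : ∀ x : ℝ, Real.sinh (a*x) * Real.sinh (b*x) / Real.cosh (c*x) ^ v
      = (Real.cosh ((a+b)*x) / Real.cosh (c*x) ^ v
          - Real.cosh ((a-b)*x) / Real.cosh (c*x) ^ v) / 2 := by
    intro x
    rw [show (a+b)*x = a*x + b*x by ring, show (a-b)*x = a*x - b*x by ring,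
      Real.cosh_add, Real.cosh_sub]
    ring
  simp only [e]
  rw [integral_div, integral_sub (coshIntble _ _ _ hc hv0 hab1) (coshIntble _ _ _ hc hv0 hab2)]
  rw [coshScaled _ _ _ hc hv0 hab1, coshScaled _ _ _ hc hv0 hab2]
  have hG : Real.Gamma v ≠ 0 := (Real.Gamma_pos_of_pos hv0).ne'
  rw [show (2:ℝ)^(v-3) = 2^(v-2)/2 by
    rw [show v-3 = (v-2)-1 by ring, Real.rpow_sub (by norm_num), Real.rpow_one]]
  rw [show v*c - (a+b) = v*c - a - b by ring, show v*c + (a-b) = v*c + a - b by ring,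
    show v*c - (a-b) = v*c - a + b by ring, show v*c + (a+b) = v*c + a + b by ring]
  field_simp
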